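/- Let R be a finite commutative ring with identity, T = Tr(R), and n a nonzero zero-divisor of R. Let A be the matrix with a11 = n, a12 = 0, a21 = 0, a22 = 0, and let Z(n) = {s ∈ R : sn = 0}. Then N(A) consists exactly of the matrices [[a,b],[0,c]] with a,c ∈ R and b ∈ Z(n), excluding scalar matrices and A itself, and |N(A)| = |Z(n)|·|R|^2 − |R| − 1. -/

import Mathlib

open Matrix

/-- The ring of 2×2 upper triangular matrices over `R`. -/
def Tri (R : Type*) [CommRing R] : Subring (Matrix (Fin 2) (Fin 2) R) where
  carrier := {A | A 1 0 = 0}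
  mul_mem' := by
    intro a b ha hb
    simp only [Set.mem_setOf_eq] at *
    simp [Matrix.mul_apply, Fin.sum_univ_two, ha, hb]
  one_mem' := by simp [Matrix.one_apply]
  add_mem' := by
    intro a b ha hb
    simp_all [Matrix.add_apply]
  zero_mem' := by simp
  neg_mem' := by
    intro a ha
    simp_all

/-- The commuting graph of a ring `T`: vertices are the noncentral elements,
two distinct vertices are adjacent iff they commute. -/
def commGraph (T : Type*) [Ring T] : SimpleGraph {x : T // x ∉ Set.center T} where
  Adj a b := a ≠ b ∧ (a : T) * b = b * a
  symm := by
    constructor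
    rintro a b ⟨h1, h2⟩
    exact ⟨h1.symm, h2.symm⟩
  loopless := by constructor; rintro a ⟨h, _⟩; exact h rfl

/-! In `Tri R` the matrix `A = [[n, 0], [0, 0]]` commutes with `[[a, b], [0, c]]` exactly when
`b n = 0`, and commuting with the matrix units `E₁₁` and `E₁₂` forces a matrix to be scalar, so
the centre is `{x • 1}`. As `n ≠ 0`, `A` is not central, hence `N(A)` is the centralizer of `A`
with the centre and `A` removed: `|Z(n)| |R|² - |R| - 1` elements. -/

theorem card_setOf_commute_ne_notMem_center {M : Type*} [Mul M] [Finite M] {a : M}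
    (ha : a ∉ Set.center M) :
    Nat.card {b : M | a * b = b * a ∧ b ≠ a ∧ b ∉ Set.center M} =
      Nat.card {b : M | a * b = b * a} - Nat.card (Set.center M) - 1 := by
  have hsub : insert a (Set.center M) ⊆ {b : M | a * b = b * a} :=
    Set.insert_subset rfl fun b hb => (hb.comm a).symm
  have hset : {b : M | a * b = b * a ∧ b ≠ a ∧ b ∉ Set.center M} =
      {b : M | a * b = b * a} \ insert a (Set.center M) := by
    ext b
    simp only [Set.mem_ofPred_eq, Set.mem_sdiff, Set.mem_insert_iff, not_or]
  simp only [hset, Nat.card_coe_set_eq, Set.ncard_sdiff hsub, Set.ncard_insert_of_notMem ha,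
    Nat.sub_sub]

theorem Matrix.smul_one_fin_two {R : Type*} [Semiring R] (x : R) :
    x • (1 : Matrix (Fin 2) (Fin 2) R) = !![x, 0; 0, x] := by
  simp [one_fin_two]

namespace Tri

variable {R : Type*} [CommRing R]

def mk (a b c : R) : Tri R := ⟨!![a, b; 0, c], rfl⟩

@[simp]
theorem coe_mk (a b c : R) : (mk a b c : Matrix (Fin 2) (Fin 2) R) = !![a, b; 0, c] := rfl

theorem eta (B : Tri R) : B = mk (B.1 0 0) (B.1 0 1) (B.1 1 1) := by
  ext : 1
  conv_lhs => rw [eta_fin_two B.1, show B.1 1 0 = 0 from B.2]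
  rfl

def equivProd : Tri R ≃ R × R × R where
  toFun B := (B.1 0 1, B.1 0 0, B.1 1 1)
  invFun p := mk p.2.1 p.1 p.2.2
  left_inv B := (eta B).symm
  right_inv _ := rfl

theorem card_setOf_entry_zero_one [Finite R] (p : R → Prop) :
    Nat.card {B : Tri R | p (B.1 0 1)} = Nat.card {s : R | p s} * Nat.card R ^ 2 := by
  have e : {B : Tri R | p (B.1 0 1)} ≃ {s : R | p s} × R × R :=
    (equivProd.subtypeEquiv fun _ => Iff.rfl).trans Equiv.prodSubtypeFstEquivSubtypeProd
  rw [Nat.card_congr e, Nat.card_prod, Nat.card_prod, sq]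

def scalar (x : R) : Tri R := mk x 0 x

theorem scalar_injective : Function.Injective (scalar : R → Tri R) := fun x y h => by
  simpa [scalar] using congrArg (fun B : Tri R => B.1 0 0) h

theorem mem_center_iff (B : Tri R) :
    B ∈ Set.center (Tri R) ↔ ∃ x : R, (B : Matrix (Fin 2) (Fin 2) R) = x • 1 := by
  refine ⟨fun h => ?_, fun ⟨x, hx⟩ => Semigroup.mem_center_iff.2 fun C => ?_⟩
  · have h₁ := congrArg (fun C : Tri R => C.1 0 1) (Semigroup.mem_center_iff.1 h (mk 1 0 0))
    have h₂ := congrArg (fun C : Tri R => C.1 0 1) (Semigroup.mem_center_iff.1 h (mk 0 1 0))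
    rw [eta B] at h₁ h₂ ⊢
    simp at h₁ h₂
    exact ⟨B.1 0 0, by simp [Matrix.smul_one_fin_two, h₁, h₂]⟩
  · exact Subtype.ext (by simp [hx])

theorem center_eq_range_scalar : Set.center (Tri R) = Set.range scalar := by
  ext B
  rw [mem_center_iff, Set.mem_range]
  simp only [Subtype.ext_iff, scalar, coe_mk, Matrix.smul_one_fin_two, eq_comm]

theorem exists_coe_eq_iff (p : R → Prop) (B : Tri R) :
    (∃ a b c : R, p b ∧ (B : Matrix (Fin 2) (Fin 2) R) = !![a, b; 0, c]) ↔ p (B.1 0 1) := by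
  refine ⟨fun ⟨a, b, c, hb, hB⟩ => by simpa [hB] using hb, fun h =>
    ⟨B.1 0 0, B.1 0 1, B.1 1 1, h, congrArg Subtype.val (eta B)⟩⟩

theorem mul_comm_iff_of_coe_eq_diag {n : R} {A : Tri R}
    (hA : (A : Matrix (Fin 2) (Fin 2) R) = !![n, 0; 0, 0]) (B : Tri R) :
    A * B = B * A ↔ B.1 0 1 * n = 0 := by
  rw [Subtype.ext_iff, Subring.coe_mul, Subring.coe_mul, hA, eta B, coe_mk, mul_fin_two,
    mul_fin_two, ← Matrix.ext_iff]
  simp [Fin.forall_fin_two, mul_comm]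

end Tri

theorem neighbourhood_A4_general {R : Type*} [CommRing R] [Fintype R] (n : R)
    (hn : n ≠ 0) (A : Tri R)
    (hA : (A : Matrix (Fin 2) (Fin 2) R) = !![n, 0; 0, 0]) :
    {B : Tri R | A * B = B * A ∧ B ≠ A ∧ B ∉ Set.center (Tri R)} =
      {B : Tri R | (∃ a b c : R, b * n = 0 ∧
          (B : Matrix (Fin 2) (Fin 2) R) = !![a, b; 0, c]) ∧
        (¬ ∃ x : R, (B : Matrix (Fin 2) (Fin 2) R) = x • (1 : Matrix (Fin 2) (Fin 2) R)) ∧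
        B ≠ A} ∧
    Nat.card {B : Tri R | A * B = B * A ∧ B ≠ A ∧ B ∉ Set.center (Tri R)} =
      Nat.card {s : R | s * n = 0} * Nat.card R ^ 2 - Nat.card R - 1 := by
  have hcomm := Tri.mul_comm_iff_of_coe_eq_diag hA
  refine ⟨?_, ?_⟩
  · ext B
    simp only [Set.mem_ofPred_eq, hcomm, Tri.mem_center_iff, Tri.exists_coe_eq_iff (· * n = 0)]
    tauto
  · have hA_center : A ∉ Set.center (Tri R) := by
      simpa [Tri.mem_center_iff, hA, Matrix.smul_one_fin_two, ← Matrix.ext_iff,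
        Fin.forall_fin_two] using hn.symm
    rw [card_setOf_commute_ne_notMem_center hA_center, Tri.center_eq_range_scalar,
      Nat.card_range_of_injective Tri.scalar_injective]
    simp_rw [hcomm]
    rw [Tri.card_setOf_entry_zero_one (· * n = 0)]

/-- Theorem 2.2(iv): for `A = [[n,0],[0,0]]` with `n` a nonzero zero-divisor,
the neighbourhood of `A` consists exactly of the matrices `[[a,b],[0,c]]` with
`b` in the annihilator `Z(n) = {s | s n = 0}`, excluding scalar matrices and
`A` itself, and it has `|Z(n)| |R|^2 - |R| - 1` elements. -/
theorem neighbourhood_A4 {R : Type*} [CommRing R] [Fintype R] (n : R)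
    (hn : n ≠ 0) (hzd : ∃ s : R, s ≠ 0 ∧ s * n = 0) (A : Tri R)
    (hA : (A : Matrix (Fin 2) (Fin 2) R) = !![n, 0; 0, 0]) :
    {B : Tri R | A * B = B * A ∧ B ≠ A ∧ B ∉ Set.center (Tri R)} =
      {B : Tri R | (∃ a b c : R, b * n = 0 ∧
          (B : Matrix (Fin 2) (Fin 2) R) = !![a, b; 0, c]) ∧
        (¬ ∃ x : R, (B : Matrix (Fin 2) (Fin 2) R) = x • (1 : Matrix (Fin 2) (Fin 2) R)) ∧
        B ≠ A} ∧
    Nat.card {B : Tri R | A * B = B * A ∧ B ≠ A ∧ B ∉ Set.center (Tri R)} =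
      Nat.card {s : R | s * n = 0} * Nat.card R ^ 2 - Nat.card R - 1 :=
  neighbourhood_A4_general n hn A hA
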